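/- arXiv:math/0503340 — 3 statements merged into one kernel-verified Lean document; each statement's English description precedes it below -/
import Mathlib

section
/- Let Z₀ be the inverse of the Cartan matrix of Aₙ and let b be an integer. Then the matrix b·Z₀ has integer entries if and only if (n+1) divides b. Consequently, the set of matrices [[a·Iₙ, b·Z₀],[c·Z₀⁻¹, d·Iₙ]] in Sp(2n, ℤ) with ad−bc=1 is in bijection with {(a,b,c,d) ∈ SL₂(ℤ) : (n+1) ∣ b} (the group Γ⁰(n+1)). -/
open Matrix

/-- The Cartan matrix of Aₙ over ℝ. -/
noncomputable def cartanAn (n : ℕ) : Matrix (Fin n) (Fin n) ℝ :=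
  Matrix.of fun i j : Fin n =>
    if i = j then (2 : ℝ)
    else if (i : ℤ) - (j : ℤ) = 1 ∨ (j : ℤ) - (i : ℤ) = 1 then -1
    else 0

/-- The Cartan matrix of Aₙ over ℤ. -/
def czAn (n : ℕ) : Matrix (Fin n) (Fin n) ℤ :=
  Matrix.of fun i j : Fin n =>
    if i = j then (2 : ℤ)
    else if (i : ℤ) - (j : ℤ) = 1 ∨ (j : ℤ) - (i : ℤ) = 1 then -1
    else 0

lemma cartanAn_eq_map (n : ℕ) : cartanAn n = (czAn n).map (Int.cast : ℤ → ℝ) := by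
  ext i j
  simp only [cartanAn, czAn, Matrix.map_apply, Matrix.of_apply]
  split_ifs <;> simp

lemma czAn_apply (n : ℕ) (i j : Fin n) :
    czAn n i j = if (i : ℤ) = (j : ℤ) then 2
      else if (i : ℤ) - (j : ℤ) = 1 ∨ (j : ℤ) - (i : ℤ) = 1 then -1 else 0 := by
  have e : (i = j) ↔ ((i : ℤ) = (j : ℤ)) := by
    rw [Fin.ext_iff]; exact_mod_cast Iff.rfl
  by_cases h : (i : ℤ) = (j : ℤ)
  · rw [if_pos h]; simp [czAn, e.mpr h]
  · rw [if_neg h]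
    simp only [czAn, Matrix.of_apply, if_neg (fun hh => h (e.mp hh))]

lemma czAn_diff {n m : ℕ} (i j : Fin n) (i' j' : Fin m)
    (h : (i : ℤ) - (j : ℤ) = (i' : ℤ) - (j' : ℤ)) : czAn n i j = czAn m i' j' := by
  rw [czAn_apply, czAn_apply]
  split_ifs <;> first | rfl | omega

lemma czAn_det (n : ℕ) : (czAn n).det = (n : ℤ) + 1 := by
  induction n using Nat.strong_induction_on with
  | _ n ih =>
    match n with
    | 0 => simp [Matrix.det_fin_zero]
    | 1 =>
      rw [Matrix.det_fin_one]
      norm_num [czAn]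
    | (m+2) =>
      have h1 : ((czAn (m+2)).submatrix Fin.succ (Fin.succAbove 0)) = czAn (m+1) := by
        ext i j
        simp only [Matrix.submatrix_apply, Fin.succAbove_zero]
        exact czAn_diff _ _ _ _ (by simp only [Fin.val_succ]; push_cast; ring)
      have h01 : czAn (m+2) 0 0 = 2 := by simp [czAn]
      have h02 : czAn (m+2) 0 1 = -1 := by
        simp only [czAn, Matrix.of_apply]
        rw [if_neg (by simp [Fin.ext_iff]), if_pos]
        right
        simp
      have htail : ∀ j : Fin m, czAn (m+2) 0 (j.succ.succ) = 0 := by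
        intro j
        simp only [czAn, Matrix.of_apply]
        rw [if_neg, if_neg]
        · simp only [Fin.val_succ, Fin.val_zero]
          push_cast
          omega
        · simp [Fin.ext_iff]
      -- the (0,1) minor
      have h2 : ((czAn (m+2)).submatrix Fin.succ (Fin.succAbove 1)).det
          = -((czAn m).det) := by
        rw [Matrix.det_succ_column_zero]
        rw [Fin.sum_univ_succ]
        have hm00 : (czAn (m+2)).submatrix Fin.succ (Fin.succAbove 1) 0 0 = -1 := by
          simp only [Matrix.submatrix_apply]
          have : (Fin.succAbove 1 (0 : Fin (m+1))) = (0 : Fin (m+2)) := by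
            simp [Fin.succAbove, Fin.lt_iff_val_lt_val]
          rw [this]
          simp only [czAn, Matrix.of_apply]
          rw [if_neg (by simp [Fin.ext_iff]), if_pos]
          left
          simp
        have hmtail : ∀ i : Fin m,
            (czAn (m+2)).submatrix Fin.succ (Fin.succAbove 1) i.succ 0 = 0 := by
          intro i
          simp only [Matrix.submatrix_apply]
          have : (Fin.succAbove 1 (0 : Fin (m+1))) = (0 : Fin (m+2)) := by
            simp [Fin.succAbove, Fin.lt_iff_val_lt_val]
          rw [this]
          simp only [czAn, Matrix.of_apply]
          rw [if_neg, if_neg]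
          · simp only [Fin.val_succ, Fin.val_zero]
            push_cast
            omega
          · simp [Fin.ext_iff]
        have hminor : ((czAn (m+2)).submatrix Fin.succ (Fin.succAbove 1)).submatrix
            (Fin.succAbove 0) Fin.succ = czAn m := by
          ext i j
          simp only [Matrix.submatrix_apply, Fin.succAbove_zero]
          have : (Fin.succAbove 1 (j.succ : Fin (m+1))) = (j.succ.succ : Fin (m+2)) := by
            simp [Fin.succAbove, Fin.lt_iff_val_lt_val]
          rw [this]
          exact czAn_diff _ _ _ _ (by simp only [Fin.val_succ]; push_cast; ring)
        rw [Finset.sum_eq_zero (fun i _ => by rw [hmtail i]; ring)]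
        rw [hm00, hminor]
        simp
      rw [Matrix.det_succ_row_zero, Fin.sum_univ_succ, Fin.sum_univ_succ]
      rw [Finset.sum_eq_zero (fun j _ => by rw [htail j]; ring)]
      have hsz : ((0 : Fin (m+1)).succ : Fin (m+2)) = 1 := rfl
      rw [hsz, h01, h02, h1, h2, ih (m+1) (by omega), ih m (by omega)]
      simp [Fin.val_zero, Fin.val_one]
      ring

lemma czAn_mulVec (n : ℕ) (i : Fin n) :
    (czAn n *ᵥ fun j : Fin n => (j : ℤ) + 1) i
      = if (i : ℕ) = n - 1 then (n : ℤ) + 1 else 0 := by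
  classical
  set G : ℕ → ℤ := fun p =>
    if p = (i : ℕ) then -((i : ℕ) : ℤ)
    else if p = (i : ℕ) + 1 then ((i : ℕ) : ℤ) + 2 else 0 with hG
  have key : ∀ j : Fin n, czAn n i j * ((j : ℤ) + 1) = G ((j : ℕ) + 1) - G (j : ℕ) := by
    intro j
    rw [czAn_apply]
    simp only [hG]
    split_ifs <;> omega
  have : (czAn n *ᵥ fun j : Fin n => (j : ℤ) + 1) i
      = ∑ j : Fin n, czAn n i j * ((j : ℤ) + 1) := by
    simp [Matrix.mulVec, dotProduct]
  rw [this, Finset.sum_congr rfl (fun j _ => key j),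
    Fin.sum_univ_eq_sum_range (fun p => G (p + 1) - G p) n, Finset.sum_range_sub]
  have hi := i.isLt
  simp only [hG]
  split_ifs <;> first | omega | exact absurd trivial (by assumption) | exact (‹False›).elim

lemma cartan_mulVec (n : ℕ) (i : Fin n) :
    (cartanAn n *ᵥ fun j : Fin n => ((j : ℕ) : ℝ) + 1) i
      = if (i : ℕ) = n - 1 then (n : ℝ) + 1 else 0 := by
  have h := congrArg (fun z : ℤ => (z : ℝ)) (czAn_mulVec n i)
  simp only [Matrix.mulVec, dotProduct] at h ⊢
  push_cast at h
  rw [cartanAn_eq_map]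
  simpa [Matrix.map_apply, apply_ite (fun z : ℤ => (z : ℝ))] using h

lemma cartan_det (n : ℕ) : (cartanAn n).det = (n : ℝ) + 1 := by
  rw [cartanAn_eq_map]
  have : ((czAn n).map (Int.cast : ℤ → ℝ)) = (Int.castRingHom ℝ).mapMatrix (czAn n) := rfl
  rw [this, ← RingHom.map_det, czAn_det]
  simp

lemma cartan_isUnit_det (n : ℕ) : IsUnit (cartanAn n).det := by
  rw [cartan_det]
  apply isUnit_iff_ne_zero.mpr
  positivity

/-- For Z₀ = C⁻¹ the inverse of the Cartan matrix of Aₙ and b ∈ ℤ,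
the matrix b·Z₀ is integral iff (n+1) ∣ b.  Consequently, for a,b,c,d ∈ ℤ with
ad − bc = 1, the block matrix [[aI, bZ₀],[cZ₀⁻¹, dI]] lies in Sp(2n,ℤ) — i.e. both
off-diagonal blocks are integral — iff (n+1) ∣ b; this identifies the set of such
matrices with Γ⁰(n+1) = {(a,b,c,d) ∈ SL₂(ℤ) : (n+1) ∣ b}. -/
theorem integral_multiple_of_inv_cartan_An_iff (n : ℕ) (b : ℤ) :
    ((∀ i j : Fin n, ∃ k : ℤ, (b : ℝ) * (cartanAn n)⁻¹ i j = (k : ℝ)) ↔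
      ((n : ℤ) + 1) ∣ b) ∧
    (∀ a c d : ℤ, a * d - b * c = 1 →
      (((∀ i j : Fin n, ∃ k : ℤ, (b : ℝ) * (cartanAn n)⁻¹ i j = (k : ℝ)) ∧
        (∀ i j : Fin n, ∃ k : ℤ, (c : ℝ) * ((cartanAn n)⁻¹)⁻¹ i j = (k : ℝ))) ↔
        ((n : ℤ) + 1) ∣ b)) := by
  classical
  have hunit := cartan_isUnit_det n
  have core : (∀ i j : Fin n, ∃ k : ℤ, (b : ℝ) * (cartanAn n)⁻¹ i j = (k : ℝ)) ↔
      ((n : ℤ) + 1) ∣ b := by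
    constructor
    · intro h
      rcases n with _ | m
      · norm_num
      · obtain ⟨k, hk⟩ := h ⟨0, Nat.succ_pos m⟩ ⟨m, Nat.lt_succ_self m⟩
        set L : Fin (m+1) := ⟨m, Nat.lt_succ_self m⟩ with hL
        set v : Fin (m+1) → ℝ := fun j => ((j : ℕ) : ℝ) + 1 with hv
        have hmul : (cartanAn (m+1))⁻¹ * cartanAn (m+1) = 1 :=
          Matrix.nonsing_inv_mul _ (cartan_isUnit_det (m+1))
        have hfun : cartanAn (m+1) *ᵥ v = fun j : Fin (m+1) =>
            if j = L then ((m : ℝ) + 2) else 0 := by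
          funext i
          rw [hv, cartan_mulVec]
          have hc : ((i : ℕ) = (m+1) - 1) ↔ (i = L) := by
            rw [Fin.ext_iff, hL]
            simp
          rw [show ((m+1 : ℕ) : ℝ) + 1 = (m : ℝ) + 2 by push_cast; ring]
          by_cases hcc : i = L
          · rw [if_pos (hc.mpr hcc), if_pos hcc]
          · rw [if_neg (fun hh => hcc (hc.mp hh)), if_neg hcc]
        have hid : (cartanAn (m+1))⁻¹ *ᵥ (cartanAn (m+1) *ᵥ v) = v := by
          rw [Matrix.mulVec_mulVec, hmul, Matrix.one_mulVec]
        rw [hfun] at hid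
        have hentry : (cartanAn (m+1))⁻¹ ⟨0, Nat.succ_pos m⟩ L * ((m : ℝ) + 2) = 1 := by
          have h0 := congrFun hid ⟨0, Nat.succ_pos m⟩
          simp only [Matrix.mulVec, dotProduct, mul_ite, mul_zero,
            Finset.sum_ite_eq', Finset.mem_univ, if_true, hv] at h0
          simpa using h0
        have hb : (b : ℝ) = (k : ℝ) * ((m : ℝ) + 2) := by
          linear_combination ((m : ℝ) + 2) * hk - (b : ℝ) * hentry
        have hbz : b = ((m : ℤ) + 2) * k := by
          have : (b : ℝ) = (((((m : ℤ) + 2) * k : ℤ)) : ℝ) := by push_cast; linarith [hb]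
          exact_mod_cast this
        exact ⟨k, by push_cast; linear_combination hbz⟩
    · rintro ⟨m', rfl⟩ i j
      refine ⟨m' * (czAn n).adjugate i j, ?_⟩
      have hne : ((n : ℝ) + 1) ≠ 0 := by positivity
      have hadj : (cartanAn n)⁻¹
          = (((n : ℝ) + 1))⁻¹ • ((czAn n).adjugate.map (Int.cast : ℤ → ℝ)) := by
        rw [Matrix.inv_def, cartan_det, Ring.inverse_eq_inv]
        congr 1
        rw [cartanAn_eq_map]
        have hmA := (Int.castRingHom ℝ).map_adjugate (czAn n)
        rw [RingHom.mapMatrix_apply, RingHom.mapMatrix_apply] at hmA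
        exact hmA.symm
      rw [hadj]
      simp only [Matrix.smul_apply, Matrix.map_apply, smul_eq_mul]
      field_simp
      push_cast
      ring
  refine ⟨core, fun a c d _ => ?_⟩
  constructor
  · exact fun h => core.mp h.1
  · intro hd
    refine ⟨core.mpr hd, fun i j => ?_⟩
    rw [Matrix.nonsing_inv_nonsing_inv _ hunit, cartanAn_eq_map]
    exact ⟨c * czAn n i j, by push_cast [Matrix.map_apply]; ring⟩
end

section
/- There exists a unimodular integer 2×2 matrix A such that A·Z₁·Aᵀ = Z₂, where Z₁ = (1/3)·[[6,3],[3,2]] is the Riemann-matrix coefficient for the root system G₂ and Z₂ = (1/3)·[[2,1],[1,2]] is that for A₂. (One may take A = [[1,−2],[0,1]] up to sign conventions.) -/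
open Matrix

/-- There exists a unimodular integer 2×2 matrix A with
A·Z₁·Aᵀ = Z₂, where Z₁ = (1/3)·[[6,3],[3,2]] is the Riemann-matrix coefficient for
the root system G₂ and Z₂ = (1/3)·[[2,1],[1,2]] is that for A₂. -/
theorem G2_A2_riemann_matrices_equivalent :
    ∃ A : Matrix (Fin 2) (Fin 2) ℤ, IsUnit A.det ∧
      (A.map (fun k : ℤ => (k : ℝ))) * ((1 / 3 : ℝ) • !![6, 3; 3, 2]) *
          (A.map (fun k : ℤ => (k : ℝ)))ᵀ =
        (1 / 3 : ℝ) • !![2, 1; 1, 2] := by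
  refine ⟨!![1, -1; 0, 1], ?_, ?_⟩
  · simp [Matrix.det_fin_two_of]
  · ext i j
    fin_cases i <;> fin_cases j <;>
      simp [Matrix.mul_apply, Fin.sum_univ_two, Matrix.map_apply] <;> norm_num
end

section
/- Let ρ : G → GL(n, ℤ) be a representation of a finite group whose real extension is absolutely irreducible, with invariant Gram matrix S (so ρ(g)ᵀ S ρ(g) = S for all g). If Z = W + iY ∈ 𝓗ₙ (W, Y real symmetric, Y positive definite) satisfies ρ(g)·Z·ρ(g)ᵀ = Z for all g ∈ G, then there exists τ ∈ ℂ with Im τ > 0 such that Z = τ·S⁻¹. -/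
/-!
Since `ρ(g) Z ρ(g)ᵀ = Z` and `ρ(g)ᵀ S ρ(g) = S`, the matrix `Z S` commutes with every
`ρ(g)`. By Schur's lemma (an eigenspace of `Z S` is `ρ`-invariant) `Z S = τ • 1`, so
`Z = τ S⁻¹`. Taking imaginary parts, `Y = (Im τ) S⁻¹` with both `Y` and `S⁻¹` positive
definite, so `Im τ > 0`.
-/

open Matrix

theorem Matrix.exists_eq_smul_one_of_forall_commute {ι K n : Type*} [Field K] [IsAlgClosed K]
    [Fintype n] [DecidableEq n] [Nonempty n] (P : ι → Matrix n n K)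
    (hirr : ∀ V : Submodule K (n → K), (∀ i v, v ∈ V → P i *ᵥ v ∈ V) →
      V = ⊥ ∨ V = ⊤)
    (A : Matrix n n K) (hA : ∀ i, Commute (P i) A) : ∃ c : K, A = c • 1 := by
  obtain ⟨c, hc⟩ := Module.End.exists_eigenvalue (toLin' A)
  set E := Module.End.eigenspace (toLin' A) c
  have hinv : ∀ i v, v ∈ E → P i *ᵥ v ∈ E := by
    intro i v hv
    rw [Module.End.mem_eigenspace_iff, toLin'_apply] at hv ⊢
    rw [mulVec_mulVec, ← (hA i).eq, ← mulVec_mulVec, hv, mulVec_smul]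
  refine ⟨c, ?_⟩
  rcases hirr _ hinv with hbot | htop
  · exact absurd hbot (Module.End.hasEigenvalue_iff.mp hc)
  · refine toLin'.injective <| LinearMap.ext fun v => ?_
    have hv : v ∈ E := htop ▸ Submodule.mem_top
    simpa using Module.End.mem_eigenspace_iff.mp hv

theorem Matrix.commute_mul_of_mul_mul_transpose_eq {R n : Type*} [NonUnitalSemiring R]
    [Fintype n] {P Z S : Matrix n n R} (hZ : P * Z * Pᵀ = Z) (hS : Pᵀ * S * P = S) :
    Commute P (Z * S) :=
  calc P * (Z * S) = P * Z * (Pᵀ * S * P) := by rw [hS, Matrix.mul_assoc]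
    _ = P * Z * Pᵀ * S * P := by simp only [Matrix.mul_assoc]
    _ = Z * S * P := by rw [hZ]

theorem Matrix.PosDef.pos_of_smul {R n : Type*} [Ring R] [LinearOrder R] [IsStrictOrderedRing R]
    [StarRing R] [Nonempty n] {A : Matrix n n R} {t : R} (hA : A.PosDef) (htA : (t • A).PosDef) :
    0 < t := by
  let i : n := Classical.arbitrary n
  exact pos_of_mul_pos_left (htA.diag_pos (i := i)) (hA.diag_pos (i := i)).le

theorem fixed_siegel_point_is_scalar_multiple_general
    {G : Type*} [Group G] {n : ℕ}
    (ρ : G →* Matrix (Fin n) (Fin n) ℤ)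
    (habs : ∀ Wsub : Submodule ℂ (Fin n → ℂ),
      (∀ (g : G) (v : Fin n → ℂ), v ∈ Wsub →
        ((ρ g).map (fun x : ℤ => (x : ℂ))).mulVec v ∈ Wsub) → Wsub = ⊥ ∨ Wsub = ⊤)
    (S : Matrix (Fin n) (Fin n) ℝ) (hSpos : S.PosDef)
    (hSinv : ∀ g : G,
      ((ρ g).map (fun k : ℤ => (k : ℝ)))ᵀ * S * (ρ g).map (fun k : ℤ => (k : ℝ)) = S)
    (W Y : Matrix (Fin n) (Fin n) ℝ)
    (hYpos : Y.PosDef)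
    (hfix : ∀ g : G,
      (ρ g).map (fun k : ℤ => (k : ℂ)) *
          (W.map (fun x : ℝ => (x : ℂ)) + Complex.I • Y.map (fun x : ℝ => (x : ℂ))) *
          ((ρ g).map (fun k : ℤ => (k : ℂ)))ᵀ =
        W.map (fun x : ℝ => (x : ℂ)) + Complex.I • Y.map (fun x : ℝ => (x : ℂ))) :
    ∃ τ : ℂ, 0 < τ.im ∧
      W.map (fun x : ℝ => (x : ℂ)) + Complex.I • Y.map (fun x : ℝ => (x : ℂ)) =
        τ • (S⁻¹).map (fun x : ℝ => (x : ℂ)) := by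
  rcases isEmpty_or_nonempty (Fin n) with hn | hn
  · exact ⟨Complex.I, by simp, Subsingleton.elim _ _⟩
  set Z := W.map (fun x : ℝ => (x : ℂ)) + Complex.I • Y.map (fun x : ℝ => (x : ℂ))
  have hSinvC : ∀ g, ((ρ g).map (fun k : ℤ => (k : ℂ)))ᵀ * S.map Complex.ofRealHom *
      (ρ g).map (fun k : ℤ => (k : ℂ)) = S.map Complex.ofRealHom := fun g => by
    simpa [Matrix.map_mul, ← Matrix.transpose_map, Matrix.map_map, Function.comp_def] using
      congrArg (Matrix.map · Complex.ofRealHom) (hSinv g)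
  obtain ⟨τ, hτ⟩ := exists_eq_smul_one_of_forall_commute _ habs _
    fun g => commute_mul_of_mul_mul_transpose_eq (hfix g) (hSinvC g)
  have hZ : Z = τ • (S⁻¹).map (fun x : ℝ => (x : ℂ)) := calc
    Z = Z * (S * S⁻¹).map Complex.ofRealHom := by
      rw [S.mul_nonsing_inv (S.isUnit_iff_isUnit_det.mp hSpos.isUnit),
        Matrix.map_one _ (by simp) (by simp), Matrix.mul_one]
    _ = τ • (S⁻¹).map (fun x : ℝ => (x : ℂ)) := by
      rw [Matrix.map_mul, ← Matrix.mul_assoc, hτ, Matrix.smul_mul, Matrix.one_mul]; rfl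
  refine ⟨τ, hSpos.inv.pos_of_smul ?_, hZ⟩
  have hY : Y = τ.im • S⁻¹ := by
    ext i j
    simpa [Z] using congrArg Complex.im (congrFun (congrFun hZ i) j)
  exact hY ▸ hYpos

/-- Let ρ : G → GL(n,ℤ) be an integral representation of a finite
group whose complexification is irreducible (absolute irreducibility), with
invariant positive definite Gram matrix S (ρ(g)ᵀSρ(g) = S).  If Z = W + iY is in
the Siegel upper half-space (W, Y real symmetric, Y positive definite) and
ρ(g)·Z·ρ(g)ᵀ = Z for all g, then Z = τ·S⁻¹ for some τ ∈ ℂ with Im τ > 0. -/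
theorem fixed_siegel_point_is_scalar_multiple
    {G : Type*} [Group G] [Finite G] {n : ℕ}
    (ρ : G →* Matrix (Fin n) (Fin n) ℤ)
    (habs : ∀ Wsub : Submodule ℂ (Fin n → ℂ),
      (∀ (g : G) (v : Fin n → ℂ), v ∈ Wsub →
        ((ρ g).map (fun x : ℤ => (x : ℂ))).mulVec v ∈ Wsub) → Wsub = ⊥ ∨ Wsub = ⊤)
    (S : Matrix (Fin n) (Fin n) ℝ) (hSpos : S.PosDef)
    (hSinv : ∀ g : G,
      ((ρ g).map (fun k : ℤ => (k : ℝ)))ᵀ * S * (ρ g).map (fun k : ℤ => (k : ℝ)) = S)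
    (W Y : Matrix (Fin n) (Fin n) ℝ)
    (hWsym : Wᵀ = W) (hYsym : Yᵀ = Y) (hYpos : Y.PosDef)
    (hfix : ∀ g : G,
      (ρ g).map (fun k : ℤ => (k : ℂ)) *
          (W.map (fun x : ℝ => (x : ℂ)) + Complex.I • Y.map (fun x : ℝ => (x : ℂ))) *
          ((ρ g).map (fun k : ℤ => (k : ℂ)))ᵀ =
        W.map (fun x : ℝ => (x : ℂ)) + Complex.I • Y.map (fun x : ℝ => (x : ℂ))) :
    ∃ τ : ℂ, 0 < τ.im ∧
      W.map (fun x : ℝ => (x : ℂ)) + Complex.I • Y.map (fun x : ℝ => (x : ℂ)) =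
        τ • (S⁻¹).map (fun x : ℝ => (x : ℂ)) :=
  fixed_siegel_point_is_scalar_multiple_general ρ habs S hSpos hSinv W Y hYpos hfix
end
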